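/- Let A be a unital ℂ-algebra, M an A-module, and let f⁺, f⁻ ∈ M. Let u ∈ A be invertible with inverse v. Then f⁺ = u • f⁻ if and only if f⁻ = v • f⁺. In particular, for e ∈ A with (e+1)(e-q·1) = 0 and a, b ≠ 0 with a + b = q + 1, the relation f⁺ = (1/a) • ((e - (b-1)·1) • f⁻) holds if and only if f⁻ = (1/b) • ((e - (a-1)·1) • f⁺). -/
import Mathlib


theorem stmt9 (A : Type*) [Ring A] [Algebra ℂ A]
    (M : Type*) [AddCommGroup M] [Module A M] [Module ℂ M] [IsScalarTower ℂ A M]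
    (q a b : ℂ) (ha : a ≠ 0) (hb : b ≠ 0) (hab : a + b = q + 1)
    (e : A) (hquad : (e + 1) * (e - q • (1 : A)) = 0)
    (fp fm : M) :
    (∀ u v : A, u * v = 1 → v * u = 1 → (fp = u • fm ↔ fm = v • fp)) ∧
    (fp = (1 / a) • ((e - (b - 1) • (1 : A)) • fm) ↔
      fm = (1 / b) • ((e - (a - 1) • (1 : A)) • fp)) := by
  have main : ∀ u v : A, u * v = 1 → v * u = 1 → (fp = u • fm ↔ fm = v • fp) := by
    intro u v huv hvu
    constructor
    · intro h
      rw [h, ← mul_smul, hvu, one_smul]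
    · intro h
      rw [h, ← mul_smul, huv, one_smul]
  refine ⟨main, ?_⟩
  have h := hquad
  simp only [mul_sub, add_mul, sub_mul, mul_smul_comm, smul_mul_assoc, smul_smul,
    mul_one, one_mul] at h
  have key : ∀ x y : ℂ, x + y = q + 1 →
      (e - (y - 1) • (1 : A)) * (e - (x - 1) • (1 : A)) = (x * y) • (1 : A) := by
    intro x y hxy
    simp only [mul_sub, sub_mul, mul_smul_comm, smul_mul_assoc, smul_smul,
      mul_one, one_mul]
    rw [show (e * e : A) = q • e - e + q • (1 : A) by
      linear_combination (norm := module) h]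
    match_scalars
    · linear_combination -hxy
    · linear_combination -hxy
  have h1 := key a b hab
  have h2 := key b a (by linear_combination hab)
  have := main ((1 / a) • (e - (b - 1) • (1 : A))) ((1 / b) • (e - (a - 1) • (1 : A)))
    (by
      rw [smul_mul_assoc, mul_smul_comm, h1]
      match_scalars
      field_simp)
    (by
      rw [smul_mul_assoc, mul_smul_comm, h2]
      match_scalars
      field_simp)
  rw [smul_assoc, smul_assoc] at this
  exact this
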